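/- If C is an LCD code over F_q of length n, then the code 𝒞 = η₁C ⊕ η₂C ⊕ η₃C over R is an LCD code of length n over R. -/

import Mathlib

open Polynomial

/-- The ring `R = F_q[v]/(v^3 - v)`. -/
noncomputable abbrev Rq (F : Type*) [Field F] : Type _ := AdjoinRoot (X ^ 3 - X : F[X])

/-- The image `v` of the indeterminate in `R = F_q[v]/(v^3 - v)`. -/
noncomputable abbrev vq (F : Type*) [Field F] : Rq F := AdjoinRoot.root _

/-- The Euclidean dual of a code: `C^⊥ = {x | ∀ y ∈ C, Σ xᵢyᵢ = 0}`. -/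
def dualCode {S : Type*} [CommRing S] {ι : Type*} [Fintype ι]
    (C : Submodule S (ι → S)) : Submodule S (ι → S) where
  carrier := {x | ∀ y ∈ C, ∑ i, x i * y i = 0}
  add_mem' := by
    intro a b ha hb y hy
    simp only [Set.mem_setOf_eq] at *
    simp [Pi.add_apply, add_mul, Finset.sum_add_distrib, ha y hy, hb y hy]
  zero_mem' := by intro y hy; simp
  smul_mem' := by
    intro c a ha y hy
    simp only [Set.mem_setOf_eq] at *
    simp [Pi.smul_apply, smul_eq_mul, mul_assoc, ← Finset.mul_sum, ha y hy]

/-! The idempotents `η₁, η₂, η₃` sum to `1`, so `𝒞` contains the scalar extension of `C`. The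
evaluations `v ↦ 0, 1, -1` are `F`-algebra maps `R → F` sending `η₁a + η₂b + η₃c` to `a`, `b`, `c`
respectively, and they carry `𝒞^⊥` into `C^⊥`. Hence if `η₁a + η₂b + η₃c ∈ 𝒞 ∩ 𝒞^⊥`, each of
`a, b, c` lies in `C ∩ C^⊥ = 0`. -/

namespace Rq

variable {F : Type*} [Field F]

noncomputable def evalAt (r : F) (hr : r ^ 3 = r) : Rq F →ₐ[F] F :=
  AdjoinRoot.liftAlgHom _ (AlgHom.id F F) r (by simp [hr])

@[simp]
theorem evalAt_vq (r : F) (hr : r ^ 3 = r) : evalAt r hr (vq F) = r :=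
  AdjoinRoot.liftAlgHom_root _ _ _ _

/-- `η₁ a + η₂ b + η₃ c` with `η₁ = 1 - v²`, `η₂ = (v + v²)/2`, `η₃ = (v² - v)/2`. -/
noncomputable def etaCombo (a b c : F) : Rq F :=
  (1 - vq F ^ 2) * algebraMap F (Rq F) a +
    (algebraMap F (Rq F) 2⁻¹ * (vq F + vq F ^ 2)) * algebraMap F (Rq F) b +
    (algebraMap F (Rq F) 2⁻¹ * (vq F ^ 2 - vq F)) * algebraMap F (Rq F) c

theorem evalAt_etaCombo (r : F) (hr : r ^ 3 = r) (a b c : F) :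
    evalAt r hr (etaCombo a b c) =
      (1 - r ^ 2) * a + 2⁻¹ * (r + r ^ 2) * b + 2⁻¹ * (r ^ 2 - r) * c := by
  simp only [etaCombo, map_add, map_mul, map_sub, map_one, map_pow, AlgHom.commutes, evalAt_vq,
    Algebra.algebraMap_self, RingHom.id_apply]

theorem evalAt_zero_etaCombo (a b c : F) : evalAt 0 (by norm_num) (etaCombo a b c) = a := by
  simp [evalAt_etaCombo]

theorem evalAt_one_etaCombo (h2 : (2 : F) ≠ 0) (a b c : F) :
    evalAt 1 (by norm_num) (etaCombo a b c) = b := by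
  rw [evalAt_etaCombo]
  field_simp
  ring

theorem evalAt_neg_one_etaCombo (h2 : (2 : F) ≠ 0) (a b c : F) :
    evalAt (-1) (by norm_num) (etaCombo a b c) = c := by
  rw [evalAt_etaCombo]
  field_simp
  ring

theorem etaCombo_self (h2 : (2 : F) ≠ 0) (a : F) : etaCombo a a a = algebraMap F (Rq F) a := by
  have half : algebraMap F (Rq F) 2⁻¹ * 2 = 1 := by
    rw [← map_ofNat (algebraMap F (Rq F)) 2, ← map_mul, inv_mul_cancel₀ h2, map_one]
  unfold etaCombo
  linear_combination (vq F ^ 2 * algebraMap F (Rq F) a) * half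

theorem etaCombo_zero : etaCombo (0 : F) 0 0 = 0 := by
  simp [etaCombo]

end Rq

theorem FiniteField.two_ne_zero_of_odd_card {F : Type*} [Field F] [Fintype F]
    (hodd : Odd (Fintype.card F)) : (2 : F) ≠ 0 :=
  Ring.two_ne_zero fun h => by
    have := FiniteField.even_card_iff_char_two.mp h
    rw [Nat.odd_iff] at hodd
    omega

theorem eq_zero_of_mem_of_mem_dualCode {S ι : Type*} [CommRing S] [Fintype ι]
    {C : Submodule S (ι → S)} (hLCD : C ⊓ dualCode C = ⊥) {x : ι → S} (hC : x ∈ C)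
    (hdual : x ∈ dualCode C) : x = 0 := by
  simpa only [hLCD, Submodule.mem_bot] using Submodule.mem_inf.2 ⟨hC, hdual⟩

theorem comp_mem_dualCode {T S ι : Type*} [CommRing T] [CommRing S] [Algebra T S] [Fintype ι]
    (φ : S →ₐ[T] T) {D : Submodule T (ι → T)} {𝒞 : Submodule S (ι → S)}
    (hD : ∀ y ∈ D, algebraMap T S ∘ y ∈ 𝒞) {x : ι → S} (hx : x ∈ dualCode 𝒞) :
    φ ∘ x ∈ dualCode D := by
  intro y hy
  simpa using congrArg φ (hx _ (hD y hy))

/-- If `C` is an LCD code over `F_q` of length `n`, then `𝒞 = η₁C ⊕ η₂C ⊕ η₃C`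
is an LCD code of length `n` over `R = F_q[v]/(v^3 - v)`. -/
theorem stmt_6 (F : Type*) [Field F] [Fintype F] (hodd : Odd (Fintype.card F)) (n : ℕ)
    (C : Submodule F (Fin n → F)) (hLCD : C ⊓ dualCode C = ⊥)
    (𝒞 : Submodule (Rq F) (Fin n → Rq F))
    (h𝒞 : ∀ x : Fin n → Rq F,
      x ∈ 𝒞 ↔ ∃ a ∈ C, ∃ b ∈ C, ∃ c ∈ C,
        x = fun i =>
          (1 - vq F ^ 2) * algebraMap F (Rq F) (a i) +
            (algebraMap F (Rq F) 2⁻¹ * (vq F + vq F ^ 2)) * algebraMap F (Rq F) (b i) +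
            (algebraMap F (Rq F) 2⁻¹ * (vq F ^ 2 - vq F)) * algebraMap F (Rq F) (c i))
 :
    𝒞 ⊓ dualCode 𝒞 = ⊥ := by
  have h2 := FiniteField.two_ne_zero_of_odd_card hodd
  have hdiag : ∀ y ∈ C, algebraMap F (Rq F) ∘ y ∈ 𝒞 := fun y hy =>
    (h𝒞 _).2 ⟨y, hy, y, hy, y, hy, funext fun i => (Rq.etaCombo_self h2 (y i)).symm⟩
  rw [eq_bot_iff]
  rintro x ⟨hx𝒞, hxdual⟩
  obtain ⟨a, ha, b, hb, c, hc, hx⟩ := (h𝒞 x).1 hx𝒞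
  replace hx : x = fun i => Rq.etaCombo (a i) (b i) (c i) := hx
  subst hx
  have hperp (r : F) (hr : r ^ 3 = r) :=
    comp_mem_dualCode (Rq.evalAt r hr) hdiag hxdual
  have ha0 := eq_zero_of_mem_of_mem_dualCode hLCD ha <| by
    simpa only [Function.comp_def, Rq.evalAt_zero_etaCombo] using hperp 0 (by norm_num)
  have hb0 := eq_zero_of_mem_of_mem_dualCode hLCD hb <| by
    simpa only [Function.comp_def, Rq.evalAt_one_etaCombo h2] using hperp 1 (by norm_num)
  have hc0 := eq_zero_of_mem_of_mem_dualCode hLCD hc <| by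
    simpa only [Function.comp_def, Rq.evalAt_neg_one_etaCombo h2] using hperp (-1) (by norm_num)
  subst ha0 hb0 hc0
  exact funext fun _ => Rq.etaCombo_zero
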